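/- Let B(R₁,R₂) = (1/2)(Q(R₁+R₂) − Q(R₁) − Q(R₂)) be the polarization of Q(R) = R² + R^#. If W is a Weyl curvature operator (i.e., W ∈ S²_B Λ²ℝⁿ with vanishing Ricci tensor), then B(W, Id) = 0. -/

import Mathlib

open Matrix

noncomputable section

/-! Model of Λ²ℝⁿ as the space of skew-symmetric n×n real matrices, via the
identification x∧y ↦ (u ↦ ⟨x,u⟩y - ⟨y,u⟩x), with inner product
⟨x∧y, z∧t⟩ = ⟨x,z⟩⟨y,t⟩ - ⟨x,t⟩⟨y,z⟩, i.e. ⟨A,B⟩ = (1/2) tr(AᵀB). -/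

/-- Λ²ℝⁿ, modelled as skew-symmetric matrices. -/
def sk (n : ℕ) : Submodule ℝ (Matrix (Fin n) (Fin n) ℝ) where
  carrier := {A | Aᵀ = -A}
  add_mem' := by
    intro a b ha hb
    simp only [Set.mem_setOf_eq] at *
    rw [Matrix.transpose_add, ha, hb, neg_add]
  zero_mem' := by simp
  smul_mem' := by
    intro c a ha
    simp only [Set.mem_setOf_eq] at *
    rw [Matrix.transpose_smul, ha, smul_neg]

theorem sk_mem {n : ℕ} {A : Matrix (Fin n) (Fin n) ℝ} : A ∈ sk n ↔ Aᵀ = -A := Iff.rfl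

/-- The inner product on Λ²ℝⁿ induced by the standard one on ℝⁿ. -/
def ip {n : ℕ} (A B : sk n) : ℝ := (∑ i, ∑ j, A.1 i j * B.1 i j) / 2

/-- The wedge product x∧y of two vectors of ℝⁿ, as an element of Λ²ℝⁿ. -/
def wedge {n : ℕ} (x y : Fin n → ℝ) : sk n :=
  ⟨Matrix.of fun i j => x i * y j - x j * y i, by
    rw [sk_mem]
    ext i j
    simp only [Matrix.transpose_apply, Matrix.of_apply, Matrix.neg_apply]
    ring⟩

/-- The Lie bracket on Λ²ℝⁿ ≅ so(n). -/
def br {n : ℕ} (A B : sk n) : sk n :=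
  ⟨A.1 * B.1 - B.1 * A.1, by
    have hA := A.2
    have hB := B.2
    rw [sk_mem] at *
    rw [Matrix.transpose_sub, Matrix.transpose_mul, Matrix.transpose_mul, hA, hB]
    simp only [Matrix.neg_mul, Matrix.mul_neg, neg_neg, neg_sub]⟩

/-- The i-th standard basis vector of ℝⁿ. -/
def stdVec (n : ℕ) (i : Fin n) : Fin n → ℝ := Pi.single i 1

/-- A symmetric endomorphism of Λ²ℝⁿ. -/
def IsSym {n : ℕ} (R : sk n →ₗ[ℝ] sk n) : Prop := ∀ A B, ip (R A) B = ip A (R B)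

/-- The first Bianchi identity. -/
def Bianchi {n : ℕ} (R : sk n →ₗ[ℝ] sk n) : Prop :=
  ∀ x y z t : Fin n → ℝ,
    ip (R (wedge x y)) (wedge z t) + ip (R (wedge z x)) (wedge y t)
      + ip (R (wedge y z)) (wedge x t) = 0

/-- The quadratic form η ↦ ⟨R^# η, η⟩ = -(1/2) ∑ᵢ ⟨[η, R([η, R(ωᵢ)])], ωᵢ⟩,
summed over the orthonormal basis (ωᵢⱼ = eᵢ∧eⱼ)_{i<j} of Λ²ℝⁿ. -/
def sharpForm {n : ℕ} (R : sk n →ₗ[ℝ] sk n) (η : sk n) : ℝ :=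
  -(1 / 2) * ∑ i, ∑ j,
    if i < j then
      ip (br η (R (br η (R (wedge (stdVec n i) (stdVec n j))))))
        (wedge (stdVec n i) (stdVec n j))
    else 0

/-- `S` is the sharp R^# of `R`: the symmetric operator whose quadratic form is
`sharpForm R`. -/
def IsSharp {n : ℕ} (R S : sk n →ₗ[ℝ] sk n) : Prop :=
  IsSym S ∧ ∀ η, ip (S η) η = sharpForm R η

/-- The Ricci tensor of a curvature operator. -/
def ric {n : ℕ} (R : sk n →ₗ[ℝ] sk n) (x y : Fin n → ℝ) : ℝ :=
  ∑ i, ip (R (wedge x (stdVec n i))) (wedge y (stdVec n i))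

/-- The inner product on endomorphisms of Λ²ℝⁿ induced by that of Λ²ℝⁿ. -/
def opIp {n : ℕ} (R S : sk n →ₗ[ℝ] sk n) : ℝ :=
  ∑ i, ∑ j,
    if i < j then
      ip (R (wedge (stdVec n i) (stdVec n j))) (S (wedge (stdVec n i) (stdVec n j)))
    else 0

/-! The map `R ↦ R²` contributes `2W` to `B(W, id)`, so the claim is the identity
`W # id = -W`, tested on quadratic forms since both sides are symmetric. Writing
`η = ½ ∑ᵢ ηeᵢ ∧ eᵢ` and using that `ad η` is a derivation of the wedge product,
`[η, x ∧ y] = ηx ∧ y + x ∧ ηy`, the cross terms of `η ↦ ⟨(W + id)^# η, η⟩` become contractions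
of the curvature tensor `⟨W(x ∧ y), z ∧ t⟩` against `η ⊗ η`. Ricci-flatness kills the
contractions that contain a trace, and the first Bianchi identity identifies the two that remain
with `4⟨Wη, η⟩`. -/

lemma sum_ite_lt_eq_half_sum {α : Type*} [Fintype α] [LinearOrder α] (f : α → α → ℝ)
    (hf : ∀ i j, f j i = f i j) (hf₀ : ∀ i, f i i = 0) :
    ∑ i, ∑ j, (if i < j then f i j else 0) = 2⁻¹ * ∑ i, ∑ j, f i j := by
  have hsplit : ∀ i j, f i j = (if i < j then f i j else 0) + (if j < i then f j i else 0) := by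
    intro i j
    rcases lt_trichotomy i j with h | rfl | h
    · simp [h, h.not_gt]
    · simp [hf₀]
    · simp [h, h.not_gt, hf]
  have hswap : ∑ i, ∑ j, (if j < i then f j i else 0) =
      ∑ i, ∑ j, (if i < j then f i j else 0) :=
    Finset.sum_comm
  have htotal : ∑ i, ∑ j, f i j = ∑ i, ∑ j, (if i < j then f i j else 0) +
      ∑ i, ∑ j, (if j < i then f j i else 0) := by
    simp only [← Finset.sum_add_distrib, ← hsplit]
  rw [htotal, hswap]
  ring

section

variable {n : ℕ}

lemma sk_apply_swap (A : sk n) (i j : Fin n) : A.1 j i = -A.1 i j := by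
  simpa using congrFun (congrFun (sk_mem.mp A.2) i) j

lemma ip_eq_trace (A B : sk n) : ip A B = trace (A.1 * B.1ᵀ) / 2 := by
  simp [ip, trace, mul_apply]

lemma ip_comm (A B : sk n) : ip A B = ip B A := by
  simp only [ip, mul_comm (A.1 _ _)]

lemma ip_add_left (A B C : sk n) : ip (A + B) C = ip A C + ip B C := by
  simp only [ip_eq_trace, Submodule.coe_add, Matrix.add_mul, trace_add, add_div]

lemma ip_smul_left (c : ℝ) (A B : sk n) : ip (c • A) B = c * ip A B := by
  simp only [ip_eq_trace, Submodule.coe_smul, Matrix.smul_mul, trace_smul, smul_eq_mul,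
    mul_div_assoc]

def ipBilin : sk n →ₗ[ℝ] sk n →ₗ[ℝ] ℝ :=
  LinearMap.mk₂ ℝ ip ip_add_left ip_smul_left
    (fun A B C => by rw [ip_comm, ip_add_left, ip_comm B, ip_comm C])
    (fun c A B => by rw [ip_comm, ip_smul_left, ip_comm, smul_eq_mul])

lemma ip_add_right (A B C : sk n) : ip A (B + C) = ip A B + ip A C := (ipBilin A).map_add B C

lemma ip_smul_right (c : ℝ) (A B : sk n) : ip A (c • B) = c * ip A B :=
  (ipBilin A).map_smul c B

lemma ip_neg_left (A B : sk n) : ip (-A) B = -ip A B := ipBilin.map_neg₂ A B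

lemma ip_neg_right (A B : sk n) : ip A (-B) = -ip A B := (ipBilin A).map_neg B

lemma ip_sub_left (A B C : sk n) : ip (A - B) C = ip A C - ip B C := ipBilin.map_sub₂ A B C

lemma ip_sub_right (A B C : sk n) : ip A (B - C) = ip A B - ip A C := (ipBilin A).map_sub B C

lemma ip_zero_right (A : sk n) : ip A 0 = 0 := (ipBilin A).map_zero

lemma ip_sum_left {ι : Type*} (s : Finset ι) (f : ι → sk n) (B : sk n) :
    ip (∑ i ∈ s, f i) B = ∑ i ∈ s, ip (f i) B :=
  ipBilin.map_sum₂ s f B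

lemma ip_sum_right {ι : Type*} (s : Finset ι) (A : sk n) (f : ι → sk n) :
    ip A (∑ i ∈ s, f i) = ∑ i ∈ s, ip A (f i) :=
  map_sum (ipBilin A) f s

lemma eq_zero_of_ip_self_eq_zero {A : sk n} (h : ip A A = 0) : A = 0 := by
  have hsum : ∑ p : Fin n × Fin n, A.1 p.1 p.2 * A.1 p.1 p.2 = 0 := by
    rw [Fintype.sum_prod_type]
    simpa [ip] using h
  ext i j
  exact (Finset.sum_mul_self_eq_zero_iff _ _).1 hsum (i, j) (Finset.mem_univ _)

lemma ip_br_eq_neg (η A B : sk n) : ip (br η A) B = -ip A (br η B) := by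
  have hη := sk_mem.mp η.2
  have hB := sk_mem.mp B.2
  simp only [ip_eq_trace, br, transpose_sub, transpose_mul, hη, hB, Matrix.mul_neg,
    Matrix.neg_mul, neg_neg, Matrix.sub_mul, Matrix.mul_sub, trace_sub, trace_neg, Matrix.mul_assoc]
  rw [trace_mul_comm η.1, Matrix.mul_assoc]
  ring

def brL (η : sk n) : sk n →ₗ[ℝ] sk n where
  toFun := br η
  map_add' A B := by
    apply Subtype.ext
    simp only [br, Submodule.coe_add, Matrix.mul_add, Matrix.add_mul]
    abel
  map_smul' c A := by
    apply Subtype.ext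
    simp only [br, Submodule.coe_smul, Matrix.mul_smul, Matrix.smul_mul, smul_sub,
      RingHom.id_apply]

lemma br_add (η A B : sk n) : br η (A + B) = br η A + br η B := (brL η).map_add A B

lemma br_neg (η A : sk n) : br η (-A) = -br η A := (brL η).map_neg A

lemma br_zero (η : sk n) : br η 0 = 0 := (brL η).map_zero

lemma wedge_swap (x y : Fin n → ℝ) : wedge y x = -wedge x y := by
  ext i j
  simp only [wedge, of_apply, NegMemClass.coe_neg, Matrix.neg_apply]
  ring

lemma wedge_self (x : Fin n → ℝ) : wedge x x = 0 := by
  ext i j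
  simp [wedge, mul_comm]

lemma br_wedge (η : sk n) (x y : Fin n → ℝ) :
    br η (wedge x y) = wedge (η.1 *ᵥ x) y + wedge x (η.1 *ᵥ y) := by
  ext a b
  simp only [br, wedge, Submodule.coe_add, Matrix.add_apply, Matrix.sub_apply, Matrix.mul_apply,
    of_apply, mulVec, dotProduct, mul_sub, sub_mul, Finset.sum_sub_distrib, Finset.sum_mul,
    Finset.mul_sum, sk_apply_swap η _ b]
  simp only [← Finset.sum_sub_distrib, ← Finset.sum_add_distrib]
  exact Finset.sum_congr rfl fun k _ => by ring

lemma sk_eq_half_sum_wedge (η : sk n) :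
    η = (2⁻¹ : ℝ) • ∑ i, wedge (η.1 *ᵥ stdVec n i) (stdVec n i) := by
  ext a b
  simp only [wedge, stdVec, mulVec_single_one, col_apply, SetLike.val_smul,
    AddSubmonoidClass.coe_finsetSum, Matrix.smul_apply, Matrix.sum_apply, of_apply, Pi.single_apply,
    mul_ite, mul_one, mul_zero, Finset.sum_sub_distrib, Finset.sum_ite_eq, Finset.mem_univ, if_true,
    sk_apply_swap η a b, smul_eq_mul]
  ring

def curv (R : sk n →ₗ[ℝ] sk n) (x y z t : Fin n → ℝ) : ℝ := ip (R (wedge x y)) (wedge z t)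

lemma curv_swap_left (R : sk n →ₗ[ℝ] sk n) (x y z t : Fin n → ℝ) :
    curv R y x z t = -curv R x y z t := by
  rw [curv, wedge_swap, map_neg, ip_neg_left, curv]

lemma curv_swap_right (R : sk n →ₗ[ℝ] sk n) (x y z t : Fin n → ℝ) :
    curv R x y t z = -curv R x y z t := by
  rw [curv, wedge_swap z t, ip_neg_right, curv]

lemma IsSym.curv_comm {R : sk n →ₗ[ℝ] sk n} (hR : IsSym R) (x y z t : Fin n → ℝ) :
    curv R z t x y = curv R x y z t := by
  rw [curv, hR, ip_comm, curv]

lemma sum_curv_stdVec_left (R : sk n →ₗ[ℝ] sk n) (x y : Fin n → ℝ) :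
    ∑ i, curv R (stdVec n i) x (stdVec n i) y = ric R x y := by
  refine Finset.sum_congr rfl fun i _ => ?_
  rw [curv_swap_left, curv_swap_right, neg_neg, curv]

lemma curv_eq_sub_of_bianchi {R : sk n →ₗ[ℝ] sk n} (hR : IsSym R) (hb : Bianchi R)
    (x y z t : Fin n → ℝ) : curv R x y z t = curv R y t x z - curv R x t y z := by
  have h : curv R x y z t + curv R z x y t + curv R y z x t = 0 := hb x y z t
  linarith [hR.curv_comm y t z x, curv_swap_right R y t x z, hR.curv_comm x t y z]

lemma ip_br_apply_br_wedge {R : sk n →ₗ[ℝ] sk n} (hR : IsSym R) (η : sk n)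
    (x y : Fin n → ℝ) :
    ip (br η (R (br η (wedge x y)))) (wedge x y) =
      -(curv R (η.1 *ᵥ x) y (η.1 *ᵥ x) y + 2 * curv R (η.1 *ᵥ x) y x (η.1 *ᵥ y)
        + curv R x (η.1 *ᵥ y) x (η.1 *ᵥ y)) := by
  have hxy := hR.curv_comm (η.1 *ᵥ x) y x (η.1 *ᵥ y)
  rw [ip_br_eq_neg, br_wedge]
  simp only [map_add, ip_add_left, ip_add_right, curv] at hxy ⊢
  linear_combination -hxy

lemma ip_br_br_apply_wedge (R : sk n →ₗ[ℝ] sk n) (η : sk n) (x y : Fin n → ℝ) :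
    ip (br η (br η (R (wedge x y)))) (wedge x y) =
      curv R x y (η.1 *ᵥ (η.1 *ᵥ x)) y + 2 * curv R x y (η.1 *ᵥ x) (η.1 *ᵥ y)
        + curv R x y x (η.1 *ᵥ (η.1 *ᵥ y)) := by
  rw [ip_br_eq_neg, ip_br_eq_neg, neg_neg, br_wedge, br_add, br_wedge, br_wedge]
  simp only [ip_add_right, curv]
  ring

lemma ip_apply_self_eq_sum_curv (R : sk n →ₗ[ℝ] sk n) (η : sk n) :
    ip (R η) η = 4⁻¹ * ∑ i, ∑ j,
      curv R (η.1 *ᵥ stdVec n i) (stdVec n i) (η.1 *ᵥ stdVec n j) (stdVec n j) := by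
  conv_lhs => rw [sk_eq_half_sum_wedge η]
  simp only [map_smul, map_sum, ip_smul_left, ip_smul_right, ip_sum_left]
  simp only [ip_sum_right, curv]
  ring

lemma sum_ip_br_apply_br_wedge {R : sk n →ₗ[ℝ] sk n} (hR : IsSym R)
    (hric : ∀ x y : Fin n → ℝ, ric R x y = 0) (η : sk n) :
    ∑ i, ∑ j, ip (br η (R (br η (wedge (stdVec n i) (stdVec n j)))))
        (wedge (stdVec n i) (stdVec n j)) =
      -2 * ∑ i, ∑ j, curv R (η.1 *ᵥ stdVec n i) (stdVec n j) (stdVec n i) (η.1 *ᵥ stdVec n j) := by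
  have h1 : ∑ i, ∑ j,
      curv R (η.1 *ᵥ stdVec n i) (stdVec n j) (η.1 *ᵥ stdVec n i) (stdVec n j) = 0 :=
    Finset.sum_eq_zero fun i _ => hric _ _
  have h3 : ∑ i, ∑ j,
      curv R (stdVec n i) (η.1 *ᵥ stdVec n j) (stdVec n i) (η.1 *ᵥ stdVec n j) = 0 := by
    rw [Finset.sum_comm]
    exact Finset.sum_eq_zero fun j _ => (sum_curv_stdVec_left R _ _).trans (hric _ _)
  simp only [ip_br_apply_br_wedge hR, Finset.sum_neg_distrib, Finset.sum_add_distrib,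
    ← Finset.mul_sum, h1, h3]
  ring

lemma sum_ip_br_br_apply_wedge {R : sk n →ₗ[ℝ] sk n}
    (hric : ∀ x y : Fin n → ℝ, ric R x y = 0) (η : sk n) :
    ∑ i, ∑ j, ip (br η (br η (R (wedge (stdVec n i) (stdVec n j)))))
        (wedge (stdVec n i) (stdVec n j)) =
      2 * ∑ i, ∑ j, curv R (stdVec n i) (stdVec n j) (η.1 *ᵥ stdVec n i) (η.1 *ᵥ stdVec n j) := by
  have h1 : ∑ i, ∑ j,
      curv R (stdVec n i) (stdVec n j) (η.1 *ᵥ (η.1 *ᵥ stdVec n i)) (stdVec n j) = 0 :=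
    Finset.sum_eq_zero fun i _ => hric _ _
  have h3 : ∑ i, ∑ j,
      curv R (stdVec n i) (stdVec n j) (stdVec n i) (η.1 *ᵥ (η.1 *ᵥ stdVec n j)) = 0 := by
    rw [Finset.sum_comm]
    exact Finset.sum_eq_zero fun j _ => (sum_curv_stdVec_left R _ _).trans (hric _ _)
  simp only [ip_br_br_apply_wedge, Finset.sum_add_distrib, ← Finset.mul_sum, h1, h3]
  ring

lemma sum_ip_br_cross_terms {W : sk n →ₗ[ℝ] sk n} (hW : IsSym W) (hb : Bianchi W)
    (hric : ∀ x y : Fin n → ℝ, ric W x y = 0) (η : sk n) :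
    ∑ i, ∑ j, ip (br η (W (br η (wedge (stdVec n i) (stdVec n j)))))
        (wedge (stdVec n i) (stdVec n j)) +
      ∑ i, ∑ j, ip (br η (br η (W (wedge (stdVec n i) (stdVec n j)))))
        (wedge (stdVec n i) (stdVec n j)) =
      8 * ip (W η) η := by
  have hQ : ∑ i, ∑ j, curv W (η.1 *ᵥ stdVec n i) (stdVec n i) (η.1 *ᵥ stdVec n j) (stdVec n j) =
      ∑ i, ∑ j, (curv W (stdVec n i) (stdVec n j) (η.1 *ᵥ stdVec n i) (η.1 *ᵥ stdVec n j) -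
        curv W (η.1 *ᵥ stdVec n i) (stdVec n j) (stdVec n i) (η.1 *ᵥ stdVec n j)) :=
    Finset.sum_congr rfl fun i _ => Finset.sum_congr rfl fun j _ =>
      curv_eq_sub_of_bianchi hW hb _ _ _ _
  rw [sum_ip_br_apply_br_wedge hW hric, sum_ip_br_br_apply_wedge hric,
    ip_apply_self_eq_sum_curv, hQ]
  simp only [Finset.sum_sub_distrib]
  ring

lemma sharpForm_eq (R : sk n →ₗ[ℝ] sk n) (η : sk n) :
    sharpForm R η = -4⁻¹ * ∑ i, ∑ j,
      ip (br η (R (br η (R (wedge (stdVec n i) (stdVec n j))))))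
        (wedge (stdVec n i) (stdVec n j)) := by
  rw [sharpForm, sum_ite_lt_eq_half_sum]
  · ring
  · intro i j
    rw [wedge_swap (stdVec n i)]
    simp only [map_neg, br_neg, ip_neg_left, ip_neg_right, neg_neg]
  · intro i
    rw [wedge_self, map_zero, br_zero, map_zero, br_zero, ip_zero_right]

lemma sharpForm_add_id_sub {W : sk n →ₗ[ℝ] sk n} (hW : IsSym W) (hb : Bianchi W)
    (hric : ∀ x y : Fin n → ℝ, ric W x y = 0) (η : sk n) :
    sharpForm (W + LinearMap.id) η - sharpForm W η - sharpForm LinearMap.id η =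
      -2 * ip (W η) η := by
  simp only [sharpForm_eq, LinearMap.add_apply, LinearMap.id_apply, map_add, br_add, ip_add_left,
    Finset.sum_add_distrib]
  linear_combination (-4⁻¹ : ℝ) * sum_ip_br_cross_terms hW hb hric η

lemma isSym_id : IsSym (LinearMap.id : sk n →ₗ[ℝ] sk n) := fun _ _ => rfl

lemma IsSym.add {S T : sk n →ₗ[ℝ] sk n} (hS : IsSym S) (hT : IsSym T) : IsSym (S + T) :=
  fun A B => by simp only [LinearMap.add_apply, ip_add_left, ip_add_right, hS A B, hT A B]

lemma IsSym.sub {S T : sk n →ₗ[ℝ] sk n} (hS : IsSym S) (hT : IsSym T) : IsSym (S - T) :=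
  fun A B => by simp only [LinearMap.sub_apply, ip_sub_left, ip_sub_right, hS A B, hT A B]

lemma IsSym.smul (c : ℝ) {T : sk n →ₗ[ℝ] sk n} (hT : IsSym T) : IsSym (c • T) :=
  fun A B => by simp only [LinearMap.smul_apply, ip_smul_left, ip_smul_right, hT A B]

lemma IsSym.comp_self {T : sk n →ₗ[ℝ] sk n} (hT : IsSym T) : IsSym (T ∘ₗ T) :=
  fun A B => by rw [LinearMap.comp_apply, LinearMap.comp_apply, hT, hT]

lemma IsSym.eq_zero_of_ip_apply_self {T : sk n →ₗ[ℝ] sk n} (hT : IsSym T)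
    (h : ∀ η, ip (T η) η = 0) : T = 0 := by
  ext1 η
  refine eq_zero_of_ip_self_eq_zero ?_
  have hpol := h (η + T η)
  rw [map_add, ip_add_left, ip_add_right, ip_add_right, h, h, hT (T η) η] at hpol
  linarith

end

/-- Let B(R₁,R₂) = (1/2)(Q(R₁+R₂) - Q(R₁) - Q(R₂)) be the polarization of
Q(R) = R² + R^#.  If W is a Weyl curvature operator (a symmetric endomorphism of Λ²ℝⁿ
satisfying the first Bianchi identity and having vanishing Ricci tensor), then
B(W, Id) = 0. -/
theorem stmt8 (n : ℕ) (W : sk n →ₗ[ℝ] sk n)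
    (hWsym : IsSym W) (hWb : Bianchi W) (hWric : ∀ x y : Fin n → ℝ, ric W x y = 0)
    (SW SI SWI : sk n →ₗ[ℝ] sk n)
    (hSW : IsSharp W SW) (hSI : IsSharp LinearMap.id SI)
    (hSWI : IsSharp (W + LinearMap.id) SWI) :
    ((1 : ℝ) / 2) • (((W + LinearMap.id) ∘ₗ (W + LinearMap.id) + SWI)
        - (W ∘ₗ W + SW) - (LinearMap.id ∘ₗ LinearMap.id + SI))
      = (0 : sk n →ₗ[ℝ] sk n) := by
  refine IsSym.eq_zero_of_ip_apply_self ?_ fun η => ?_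
  · exact ((((hWsym.add isSym_id).comp_self.add hSWI.1).sub (hWsym.comp_self.add hSW.1)).sub
      (isSym_id.comp_self.add hSI.1)).smul _
  · simp only [LinearMap.smul_apply, LinearMap.sub_apply, LinearMap.add_apply,
      LinearMap.comp_apply, LinearMap.id_apply, map_add, ip_smul_left, ip_sub_left, ip_add_left,
      hSW.2, hSI.2, hSWI.2]
    linear_combination (1 / 2 : ℝ) * sharpForm_add_id_sub hWsym hWb hWric η
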